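/- arXiv:1904.03039 — 2 statements merged into one kernel-verified Lean document; each statement's English description precedes it below -/
import Mathlib

section
/- For any finite multiset Γ of input angles in [0, π) and any regular orientation system 𝒞(θ) = {θ + jπ/k mod π : j = 0,…,k−1} parameterized by offset θ ∈ [0, π/k), there exists an optimal offset θ* minimizing the total distortion dist(θ) = Σ_{γ∈Γ} min_{c∈𝒞(θ)} d(c,γ) such that some orientation in 𝒞(θ*) equals some angle γ ∈ Γ, where d denotes the distance between angles modulo π (i.e., d(a,b) = min(|a−b|, π−|a−b|)). -/
/-- Angular distance modulo π. -/
noncomputable def angDist (a b : ℝ) : ℝ := ⨅ n : ℤ, |a - b - n * Real.pi|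

/-- Total distortion of the regular `k`-orientation system with offset `θ`
with respect to the multiset `Γ` of input angles. -/
noncomputable def distortion (Γ : Multiset ℝ) (k : ℕ) (hk : k ≠ 0) (θ : ℝ) : ℝ :=
  (Γ.map fun γ => (Finset.range k).inf' (Finset.nonempty_range_iff.mpr hk)
    fun j => angDist (θ + j * Real.pi / k) γ).sum

/-!
Write `L = π / k`. Coarsening the orientation system to the lattice `θ + Lℤ`, the distortion
becomes `D θ = ∑_{γ ∈ Γ} ‖θ - γ‖`, the norm taken in `ℝ / Lℤ`; it is `L`-periodic. Between two
consecutive points of `⋃_γ (γ + Lℤ)` every summand is a tent function `min (x - u) (u + L - x)`,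
so `D` is concave there and takes its minimum at an endpoint, i.e. at a point congruent to an
input angle. Hence the minimum of `D` over `Γ` is its global minimum, and reducing that input angle
modulo `L` gives the optimal offset.
-/

open Real Set

namespace AddCircle

variable {p : ℝ}

lemma coe_sub_int_mul (x : ℝ) (n : ℤ) : ((x - n * p : ℝ) : AddCircle p) = x := by
  rw [coe_sub, ← zsmul_eq_mul, coe_zsmul, coe_period, smul_zero, sub_zero]

lemma norm_coe_le_abs_sub_int_mul (x : ℝ) (n : ℤ) : ‖(x : AddCircle p)‖ ≤ |x - n * p| := by
  rw [← coe_sub_int_mul x n]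
  exact QuotientAddGroup.norm_mk_le_norm

lemma exists_norm_coe_eq_abs_sub_int_mul (x : ℝ) : ∃ n : ℤ, ‖(x : AddCircle p)‖ = |x - n * p| :=
  ⟨round (p⁻¹ * x), norm_eq p⟩

lemma norm_coe_eq_iInf_abs_sub_int_mul (x : ℝ) :
    ‖(x : AddCircle p)‖ = ⨅ n : ℤ, |x - n * p| := by
  obtain ⟨n, hn⟩ := exists_norm_coe_eq_abs_sub_int_mul (p := p) x
  refine le_antisymm (le_ciInf (norm_coe_le_abs_sub_int_mul x)) ?_
  exact hn ▸ ciInf_le ⟨0, by rintro _ ⟨m, rfl⟩; exact abs_nonneg _⟩ n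

lemma norm_coe_eq_min (hp : 0 < p) {x : ℝ} (hx : x ∈ Icc 0 p) :
    ‖(x : AddCircle p)‖ = min x (p - x) := by
  obtain ⟨hx0, hxp⟩ := hx
  refine le_antisymm (le_min ?_ ?_) ?_
  · simpa [abs_of_nonneg hx0] using norm_coe_le_abs_sub_int_mul (p := p) x 0
  · simpa [abs_of_nonpos (sub_nonpos.2 hxp)] using norm_coe_le_abs_sub_int_mul (p := p) x 1
  · obtain ⟨n, hn⟩ := exists_norm_coe_eq_abs_sub_int_mul (p := p) x
    rw [hn]
    rcases le_or_gt n 0 with hn0 | hn1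
    · have : (n : ℝ) * p ≤ 0 := mul_nonpos_of_nonpos_of_nonneg (by exact_mod_cast hn0) hp.le
      exact (min_le_left _ _).trans ((by linarith : x ≤ x - n * p).trans (le_abs_self _))
    · have : p ≤ (n : ℝ) * p := le_mul_of_one_le_left hp.le (by exact_mod_cast hn1)
      exact (min_le_right _ _).trans ((by linarith : p - x ≤ -(x - n * p)).trans (neg_le_abs _))

lemma concaveOn_norm_coe_sub (hp : 0 < p) (γ : ℝ) (m : ℤ) :
    ConcaveOn ℝ (Icc (γ + m * p) (γ + (m + 1) * p)) fun x => ‖((x - γ : ℝ) : AddCircle p)‖ := by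
  have hs : Convex ℝ (Icc (γ + m * p) (γ + (m + 1) * p)) := convex_Icc _ _
  refine (((concaveOn_id (𝕜 := ℝ) hs).add_const (-(γ + m * p))).inf
    ((concaveOn_const (γ + (m + 1) * p) hs).sub (convexOn_id (𝕜 := ℝ) hs))).congr fun x hx => ?_
  rw [← coe_sub_int_mul (x - γ) m, norm_coe_eq_min hp ⟨by linarith [hx.1], by linarith [hx.2]⟩]
  simp only [Pi.inf_apply, Pi.sub_apply, Pi.add_apply, id]
  congr 1 <;> ring

end AddCircle

lemma ConcaveOn.multiset_sum_map {𝕜 E β ι : Type*} [Semiring 𝕜] [PartialOrder 𝕜]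
    [AddCommMonoid E] [AddCommMonoid β] [PartialOrder β] [IsOrderedAddMonoid β] [SMul 𝕜 E]
    [Module 𝕜 β] {s : Set E} {Γ : Multiset ι} {f : ι → E → β} (hs : Convex 𝕜 s)
    (hf : ∀ i ∈ Γ, ConcaveOn 𝕜 s (f i)) : ConcaveOn 𝕜 s fun x => (Γ.map fun i => f i x).sum := by
  induction Γ using Multiset.induction_on with
  | empty => simpa using concaveOn_const (0 : β) hs
  | cons i Γ ih =>
    simp only [Multiset.map_cons, Multiset.sum_cons]
    exact (hf i (Multiset.mem_cons_self _ _)).add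
      (ih fun j hj => hf j (Multiset.mem_cons_of_mem hj))

section CosetDistSum

variable {p : ℝ} {Γ : Multiset ℝ}

lemma exists_bracketing_translates (hp : 0 < p) (hΓ : Γ ≠ 0) (θ : ℝ) :
    ∃ a b : ℝ, θ ∈ Icc a b ∧ (∃ γ ∈ Γ, ∃ n : ℤ, a = γ + n * p) ∧ (∃ γ ∈ Γ, ∃ n : ℤ, b = γ + n * p) ∧
      ∀ γ ∈ Γ, ∃ m : ℤ, Icc a b ⊆ Icc (γ + m * p) (γ + (m + 1) * p) := by
  let below γ := γ + ⌊(θ - γ) / p⌋ * p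
  let above γ := γ + ⌈(θ - γ) / p⌉ * p
  have hne : Γ.toFinset.Nonempty := Multiset.toFinset_nonempty.2 hΓ
  obtain ⟨γa, hγa, ha⟩ := Γ.toFinset.exists_max_image below hne
  obtain ⟨γb, hγb, hb⟩ := Γ.toFinset.exists_min_image above hne
  have hbelow : below γa ≤ θ := by
    linarith [(le_div_iff₀ hp).1 (Int.floor_le ((θ - γa) / p))]
  have habove : θ ≤ above γb := by
    linarith [(div_le_iff₀ hp).1 (Int.le_ceil ((θ - γb) / p))]
  refine ⟨below γa, above γb, ⟨hbelow, habove⟩, ⟨γa, Multiset.mem_toFinset.1 hγa, _, rfl⟩,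
    ⟨γb, Multiset.mem_toFinset.1 hγb, _, rfl⟩, fun γ hγ => ⟨⌊(θ - γ) / p⌋, ?_⟩⟩
  have hγ' := Multiset.mem_toFinset.2 hγ
  refine Icc_subset_Icc (ha γ hγ') ((hb γ hγ').trans ?_)
  have : (⌈(θ - γ) / p⌉ : ℝ) ≤ ⌊(θ - γ) / p⌋ + 1 := by exact_mod_cast Int.ceil_le_floor_add_one _
  simp only [above]
  gcongr

noncomputable def cosetDistSum (p : ℝ) (Γ : Multiset ℝ) (x : ℝ) : ℝ :=
  (Γ.map fun γ => ‖((x - γ : ℝ) : AddCircle p)‖).sum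

lemma cosetDistSum_periodic : Function.Periodic (cosetDistSum p Γ) p := fun x => by
  simp only [cosetDistSum, add_sub_right_comm, AddCircle.coe_add_period]

lemma exists_mem_cosetDistSum_le (hp : 0 < p) (hΓ : Γ ≠ 0) (θ : ℝ) :
    ∃ γ ∈ Γ, cosetDistSum p Γ γ ≤ cosetDistSum p Γ θ := by
  obtain ⟨a, b, hθ, ⟨γa, hγa, na, rfl⟩, ⟨γb, hγb, nb, rfl⟩, hbracket⟩ :=
    exists_bracketing_translates hp hΓ θ
  have hconcave : ConcaveOn ℝ (Icc (γa + na * p) (γb + nb * p)) (cosetDistSum p Γ) :=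
    ConcaveOn.multiset_sum_map (f := fun γ x => ‖((x - γ : ℝ) : AddCircle p)‖) (convex_Icc _ _)
      fun γ hγ => by
        obtain ⟨m, hm⟩ := hbracket γ hγ
        exact (AddCircle.concaveOn_norm_coe_sub hp γ m).subset hm (convex_Icc _ _)
  have hab := hθ.1.trans hθ.2
  have hmin := hconcave.min_le_of_mem_Icc (left_mem_Icc.2 hab) (right_mem_Icc.2 hab) hθ
  rw [cosetDistSum_periodic.int_mul na, cosetDistSum_periodic.int_mul nb] at hmin
  exact (min_le_iff.1 hmin).elim (⟨γa, hγa, ·⟩) (⟨γb, hγb, ·⟩)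

lemma exists_mem_forall_cosetDistSum_le (hp : 0 < p) (hΓ : Γ ≠ 0) :
    ∃ γ ∈ Γ, ∀ θ, cosetDistSum p Γ γ ≤ cosetDistSum p Γ θ := by
  obtain ⟨γ, hγ, hγmin⟩ :=
    Γ.toFinset.exists_min_image (cosetDistSum p Γ) (Multiset.toFinset_nonempty.2 hΓ)
  refine ⟨γ, Multiset.mem_toFinset.1 hγ, fun θ => ?_⟩
  obtain ⟨γ', hγ', hle⟩ := exists_mem_cosetDistSum_le hp hΓ θ
  exact (hγmin γ' (Multiset.mem_toFinset.2 hγ')).trans hle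

end CosetDistSum

lemma exists_int_mul_div_eq {k : ℕ} (hk : k ≠ 0) (m : ℤ) (x : ℝ) :
    ∃ j < k, ∃ q : ℤ, m * (x / k) = j * x / k + q * x := by
  have hk' : (0 : ℤ) < k := by exact_mod_cast Nat.pos_of_ne_zero hk
  obtain ⟨j, hj⟩ := Int.eq_ofNat_of_zero_le (Int.emod_nonneg m hk'.ne')
  refine ⟨j, by have := Int.emod_lt_of_pos m hk'; omega, m / k, ?_⟩
  have hm : (m : ℝ) = j + k * (m / k : ℤ) := by exact_mod_cast (hj ▸ Int.emod_add_mul_ediv m k).symm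
  rw [hm]
  field_simp

lemma angDist_eq_norm_coe (a b : ℝ) : angDist a b = ‖((a - b : ℝ) : AddCircle π)‖ :=
  (AddCircle.norm_coe_eq_iInf_abs_sub_int_mul _).symm

lemma inf'_angDist_eq_norm_coe {k : ℕ} (hk : k ≠ 0) (θ γ : ℝ) :
    (Finset.range k).inf' (Finset.nonempty_range_iff.mpr hk) (fun j => angDist (θ + j * π / k) γ)
      = ‖((θ - γ : ℝ) : AddCircle (π / k))‖ := by
  refine le_antisymm ?_ (Finset.le_inf' _ _ fun j _ => ?_)
  · obtain ⟨m, hm⟩ := AddCircle.exists_norm_coe_eq_abs_sub_int_mul (p := π / k) (θ - γ)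
    obtain ⟨j, hj, q, hjq⟩ := exists_int_mul_div_eq hk (-m) π
    calc _ ≤ angDist (θ + j * π / k) γ := Finset.inf'_le _ (Finset.mem_range.2 hj)
      _ ≤ |θ + j * π / k - γ - ((-q : ℤ) : ℝ) * π| := by
          rw [angDist_eq_norm_coe]; exact AddCircle.norm_coe_le_abs_sub_int_mul _ _
      _ = _ := by
          rw [hm]; push_cast at hjq ⊢; congr 1; linarith
  · obtain ⟨n, hn⟩ := AddCircle.exists_norm_coe_eq_abs_sub_int_mul (p := π) (θ + j * π / k - γ)
    have hcoarse : θ + j * π / k - γ - n * π = θ - γ - ((n * k - j : ℤ) : ℝ) * (π / k) := by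
      push_cast; field_simp; ring
    rw [angDist_eq_norm_coe, hn, hcoarse]
    exact AddCircle.norm_coe_le_abs_sub_int_mul _ _

lemma distortion_eq_cosetDistSum (Γ : Multiset ℝ) {k : ℕ} (hk : k ≠ 0) (θ : ℝ) :
    distortion Γ k hk θ = cosetDistSum (π / k) Γ θ :=
  congrArg Multiset.sum (Multiset.map_congr rfl fun γ _ => inf'_angDist_eq_norm_coe hk θ γ)

theorem exists_optimal_offset_through_input_angle
    (Γ : Multiset ℝ) (hΓ : Γ ≠ 0)
    (k : ℕ) (hk : 2 ≤ k) :
    ∃ θstar ∈ Set.Ico (0 : ℝ) (Real.pi / k),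
      (∀ θ ∈ Set.Ico (0 : ℝ) (Real.pi / k),
        distortion Γ k (by omega) θstar ≤ distortion Γ k (by omega) θ) ∧
      ∃ j < k, ∃ γ ∈ Γ, ∃ n : ℤ, θstar + j * Real.pi / k = γ + n * Real.pi := by
  have hk0 : k ≠ 0 := by omega
  have hL : 0 < π / k := div_pos pi_pos (by exact_mod_cast Nat.pos_of_ne_zero hk0)
  obtain ⟨γ, hγ, hγmin⟩ := exists_mem_forall_cosetDistSum_le hL hΓ
  obtain ⟨j, hj, q, hjq⟩ := exists_int_mul_div_eq hk0 (toIcoDiv hL 0 γ) π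
  have hreduce := toIcoMod_add_toIcoDiv_zsmul hL 0 γ
  refine ⟨toIcoMod hL 0 γ, by simpa using toIcoMod_mem_Ico hL 0 γ, fun θ _ => ?_,
    j, hj, γ, hγ, -q, ?_⟩
  · rw [distortion_eq_cosetDistSum, distortion_eq_cosetDistSum,
      ← cosetDistSum_periodic.zsmul (toIcoDiv hL 0 γ), hreduce]
    exact hγmin θ
  · rw [zsmul_eq_mul] at hreduce
    push_cast
    linarith
end

section
/- Let dir: incidences → ℤ/2kℤ assign directions and suppose at a vertex v with neighbors u_1,…,u_d (in counterclockwise input order) there exist binary values β_1,…,β_d ∈ {0,1} with Σβ_i = 1 such that dir(v,u_i) + 1 ≤ dir(v,u_{i+1}) + 2k·β_i (indices cyclic, dir interpreted as integers in {0,…,2k−1}). Then the values dir(v,u_1),…,dir(v,u_d) are pairwise distinct and their cyclic order in ℤ/2kℤ agrees with the cyclic order u_1,…,u_d. -/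
/-- Correctness of the combinatorial-embedding constraints: if the circular constraints
`dir(v,u_i) + 1 ≤ dir(v,u_{i+1}) + 2k·β_i` hold with exactly one `β_i = 1`, then the direction
values are pairwise distinct and strictly increase except at exactly one wrap-around. -/
theorem embedding_constraints_correct (k d : ℕ) [NeZero d] (hk : 1 ≤ k) (hd : d ≤ 2 * k)
    (dir : Fin d → ℕ) (hrange : ∀ i, dir i < 2 * k)
    (β : Fin d → ℕ) (hβ : ∀ i, β i ≤ 1) (hsum : ∑ i, β i = 1)
    (hcons : ∀ i : Fin d, (dir i : ℤ) + 1 ≤ (dir (i + 1) : ℤ) + 2 * k * β i) :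
    Function.Injective dir ∧ ∃! i : Fin d, ¬ dir i < dir (i + 1) := by
  obtain ⟨m, rfl⟩ := Nat.exists_eq_succ_of_ne_zero (NeZero.ne d)
  -- find the unique index i0 with β i0 = 1
  obtain ⟨i0, hi0⟩ : ∃ i0, β i0 = 1 := by
    by_contra h
    push_neg at h
    have : ∀ i ∈ Finset.univ, β i = 0 := by
      intro i _
      have := hβ i; have := h i; omega
    rw [Finset.sum_eq_zero this] at hsum
    omega
  have hzero : ∀ j, j ≠ i0 → β j = 0 := by
    intro j hj
    have h1 : ∑ i ∈ Finset.univ.erase i0, β i = 0 := by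
      have := Finset.add_sum_erase Finset.univ β (Finset.mem_univ i0)
      omega
    have := Finset.sum_eq_zero_iff.mp h1 j (Finset.mem_erase.mpr ⟨hj, Finset.mem_univ j⟩)
    exact this
  have hstep : ∀ j, j ≠ i0 → dir j < dir (j + 1) := by
    intro j hj
    have := hcons j
    rw [hzero j hj] at this
    push_cast at this
    omega
  set g : Fin (m + 1) → ℕ := fun m => dir (i0 + 1 + m) with hg
  have hsingle : ∀ b : ℕ, (hb : b + 1 < m + 1) →
      g ⟨b, Nat.lt_of_succ_lt hb⟩ < g ⟨b + 1, hb⟩ := by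
    intro b hb
    have hne : i0 + 1 + ⟨b, Nat.lt_of_succ_lt hb⟩ ≠ i0 := by
      intro h
      have : (⟨b, Nat.lt_of_succ_lt hb⟩ : Fin (m + 1)) = -1 := by
        have := congrArg (fun x => x - (i0 + 1)) h
        simpa [add_sub_cancel_left, sub_eq_iff_eq_add] using this
      have hv := congrArg Fin.val this
      have hne1 : ((-1 : Fin (m + 1))).val = m := Fin.coe_neg_one
      simp only [hne1] at hv
      omega
    have heq : (⟨b + 1, hb⟩ : Fin (m + 1)) = ⟨b, Nat.lt_of_succ_lt hb⟩ + 1 := by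
      apply Fin.ext
      simp [Fin.add_def, Nat.mod_eq_of_lt hb]
    have := hstep _ hne
    simpa [hg, heq, add_assoc] using this
  have gmono : StrictMono g := by
    intro a b hab
    obtain ⟨a, ha⟩ := a
    obtain ⟨b, hb⟩ := b
    simp only [Fin.mk_lt_mk] at hab
    induction b with
    | zero => omega
    | succ n ih =>
      rcases Nat.lt_or_ge a n with h | h
      · exact lt_trans (ih (Nat.lt_of_succ_lt hb) h) (hsingle n hb)
      · have : a = n := by omega
        subst this
        exact hsingle a hb
  constructor
  · intro x y hxy
    have hx : i0 + 1 + (x - (i0 + 1)) = x := by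
      rw [add_sub_cancel]
    have hy : i0 + 1 + (y - (i0 + 1)) = y := by
      rw [add_sub_cancel]
    have : g (x - (i0 + 1)) = g (y - (i0 + 1)) := by
      simp [hg, hx, hy, hxy]
    have := gmono.injective this
    have := congrArg (fun z => i0 + 1 + z) this
    simpa [hx, hy] using this
  · refine ⟨i0, ?_, ?_⟩
    · have h0 : g 0 = dir (i0 + 1) := by simp [hg]
      have h1 : g (-1) = dir i0 := by simp [hg]
      have := gmono.monotone (Fin.zero_le (-1 : Fin (m + 1)))
      rw [h0, h1] at this
      omega
    · intro j hj
      by_contra hne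
      exact hj (hstep j hne)
end
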